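/- Let V be a finite vertex set and N : V → Finset V with v ∉ N(v) for all v, and let H be any clustered neighborhood hypergraph for N. Then two vertices u, v are connected in H if and only if they are connected in the pairwise neighborhood graph G(N). -/

import Mathlib

/-- `H` is a clustered neighborhood hypergraph for the neighbor assignment `N`. -/
def IsClusteredNeighborhoodHypergraph {V : Type*} [DecidableEq V]
    (N : V → Finset V) (H : Set (Finset V)) : Prop :=
  (∀ h ∈ H, 2 ≤ h.card) ∧
  (∀ h ∈ H, ∃ z : V, ∃ C : Finset V, C.Nonempty ∧ C ⊆ N z ∧ h = insert z C) ∧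
  (∀ v : V, ∀ u ∈ N v, ∃ h ∈ H, v ∈ h ∧ u ∈ h)

/-- Connectivity in a hypergraph: a sequence of vertices in which consecutive
vertices share a hyperedge. -/
def HyperConnected {V : Type*} (H : Set (Finset V)) (u v : V) : Prop :=
  Relation.ReflTransGen (fun a b => ∃ h ∈ H, a ∈ h ∧ b ∈ h) u v

/-- The pairwise neighborhood graph `G(N)`: `u` and `w` are adjacent iff `u ≠ w`
and `u ∈ N w` or `w ∈ N u`. -/
def pairwiseNeighborhoodGraph {V : Type*} (N : V → Finset V) : SimpleGraph V where
  Adj u w := u ≠ w ∧ (u ∈ N w ∨ w ∈ N u)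
  symm := ⟨fun _ _ ⟨hne, h⟩ => ⟨hne.symm, h.symm⟩⟩
  loopless := ⟨fun _ ⟨hne, _⟩ => hne rfl⟩

/-! Every hyperedge of a clustered neighborhood hypergraph is a star `{z} ∪ C` with `C ⊆ N z`, so
its vertices are joined through the center `z` in `G(N)`; conversely every edge of `G(N)` is a
neighbor pair, hence covered by some hyperedge. So each of the two one-step relations lies in the
reflexive-transitive closure of the other. -/

namespace HyperConnected

variable {V : Type*} {H : Set (Finset V)} {G : SimpleGraph V} {u v : V}

theorem reachable (hH : ∀ h ∈ H, ∀ a ∈ h, ∀ b ∈ h, G.Reachable a b)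
    (huv : HyperConnected H u v) : G.Reachable u v :=
  Relation.reflTransGen_le_of_equivalence_of_le G.reachable_is_equivalence
    (fun _ _ ⟨h, hh, ha, hb⟩ => hH h hh _ ha _ hb) u v huv

theorem of_reachable (hG : ∀ a b, G.Adj a b → ∃ h ∈ H, a ∈ h ∧ b ∈ h)
    (huv : G.Reachable u v) : HyperConnected H u v :=
  Relation.ReflTransGen.mono hG u v ((G.reachable_iff_reflTransGen u v).mp huv)

end HyperConnected

namespace pairwiseNeighborhoodGraph

variable {V : Type*} {N : V → Finset V}

theorem reachable_of_mem {z x : V} (hx : x ∈ N z) :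
    (pairwiseNeighborhoodGraph N).Reachable z x := by
  by_cases hzx : z = x
  · exact hzx ▸ SimpleGraph.Reachable.refl z
  · exact SimpleGraph.Adj.reachable ⟨hzx, Or.inr hx⟩

theorem reachable_of_mem_insert [DecidableEq V] {z a b : V} {C : Finset V} (hC : C ⊆ N z)
    (ha : a ∈ insert z C) (hb : b ∈ insert z C) :
    (pairwiseNeighborhoodGraph N).Reachable a b := by
  have hz : ∀ x ∈ insert z C, (pairwiseNeighborhoodGraph N).Reachable z x := by
    intro x hx
    rcases Finset.mem_insert.mp hx with rfl | hxC
    · rfl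
    · exact reachable_of_mem (hC hxC)
  exact (hz a ha).symm.trans (hz b hb)

end pairwiseNeighborhoodGraph

namespace IsClusteredNeighborhoodHypergraph

variable {V : Type*} [DecidableEq V] {N : V → Finset V} {H : Set (Finset V)}

theorem reachable_of_mem_hyperedge (hH : IsClusteredNeighborhoodHypergraph N H)
    {h : Finset V} (hh : h ∈ H) {a b : V} (ha : a ∈ h) (hb : b ∈ h) :
    (pairwiseNeighborhoodGraph N).Reachable a b := by
  obtain ⟨z, C, -, hC, rfl⟩ := hH.2.1 h hh
  exact pairwiseNeighborhoodGraph.reachable_of_mem_insert hC ha hb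

theorem exists_hyperedge_of_adj (hH : IsClusteredNeighborhoodHypergraph N H) {a b : V}
    (hab : (pairwiseNeighborhoodGraph N).Adj a b) : ∃ h ∈ H, a ∈ h ∧ b ∈ h := by
  rcases hab.2 with hab | hba
  · obtain ⟨h, hh, hb, ha⟩ := hH.2.2 b a hab
    exact ⟨h, hh, ha, hb⟩
  · exact hH.2.2 a b hba

end IsClusteredNeighborhoodHypergraph

theorem hyperConnected_iff_reachable_pairwiseNeighborhoodGraph_general
    {V : Type*} [DecidableEq V]
    (N : V → Finset V)
    (H : Set (Finset V))
    (hH : IsClusteredNeighborhoodHypergraph N H)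
    (u v : V) :
    HyperConnected H u v ↔ (pairwiseNeighborhoodGraph N).Reachable u v :=
  ⟨HyperConnected.reachable fun _ hh _ ha _ hb => hH.reachable_of_mem_hyperedge hh ha hb,
    HyperConnected.of_reachable fun _ _ hab => hH.exists_hyperedge_of_adj hab⟩

/-- Connectivity in a clustered neighborhood hypergraph for `N` agrees with
reachability in the pairwise neighborhood graph `G(N)`. -/
theorem hyperConnected_iff_reachable_pairwiseNeighborhoodGraph
    {V : Type*} [Fintype V] [DecidableEq V]
    (N : V → Finset V) (hN : ∀ v, v ∉ N v)
    (H : Set (Finset V))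
    (hH : IsClusteredNeighborhoodHypergraph N H)
    (u v : V) :
    HyperConnected H u v ↔ (pairwiseNeighborhoodGraph N).Reachable u v :=
  hyperConnected_iff_reachable_pairwiseNeighborhoodGraph_general N H hH u v
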